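/- Let (X, ⊥, F) be an O-space. Then for all A, B, C ∈ F: (A ⊗ B) ⊗ C = Z if and only if A ⊗ (C ⊗ B) = Z. -/
import Mathlib


variable {X : Type*}

/-- Orthogonal complement: `A^⊥ = {b : b ⊥ a for all a ∈ A}`. -/
def oc (R : X → X → Prop) (A : Set X) : Set X := {b | ∀ a ∈ A, R b a}

/-- Closure: `cl(A) = (A^⊥)^⊥`. -/
def ocl (R : X → X → Prop) (A : Set X) : Set X := oc R (oc R A)

/-- The zero set `Z = {y : y ⊥ x for all x}`. -/
def zset (R : X → X → Prop) : Set X := {y | ∀ x, R y x}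

/-- Sasaki projection `A ⊗ B = cl(B) ∩ (cl(B) ∩ A^⊥)^⊥`. -/
def sproj (R : X → X → Prop) (A B : Set X) : Set X :=
  ocl R B ∩ oc R (ocl R B ∩ oc R A)

/-- Dual of the Sasaki projection: `A ⊕ B = (B^⊥ ⊗ A^⊥)^⊥`. -/
def sdual (R : X → X → Prop) (A B : Set X) : Set X :=
  oc R (sproj R (oc R B) (oc R A))

/-- Set orthogonality: `A ⊥ B` iff `a ⊥ b` for all `a ∈ A`, `b ∈ B`. -/
def orth (R : X → X → Prop) (A B : Set X) : Prop := ∀ a ∈ A, ∀ b ∈ B, R a b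

/-- An O-space: a symmetric relation satisfying Z, together with a family `F`
of subsets satisfying properties F, O and A. -/
structure IsOSpace (R : X → X → Prop) (F : Set (Set X)) : Prop where
  symm : ∀ x y : X, R x y → R y x
  zero : ∀ x : X, R x x → x ∈ zset R
  flats : ∀ A ∈ F, A = ocl R A
  singcl_mem : ∀ x : X, ocl R {x} ∈ F
  z_mem : zset R ∈ F
  oc_mem : ∀ A ∈ F, oc R A ∈ F
  sproj_mem : ∀ A ∈ F, ∀ B ∈ F, sproj R A B ∈ F
  o1 : ∀ x : X, ∀ A ∈ F, x ∈ ocl R (sproj R {x} A ∪ sproj R {x} (oc R A))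
  o2 : ∀ x : X, ∀ A ∈ F, sproj R {x} A ⊆ ocl R ({x} ∪ sproj R {x} (oc R A))
  a : ∀ A ∈ F, ∀ B ∈ F, sproj R A B ⊆ ⋃ a ∈ A, sproj R {a} B

section Aux

variable {X : Type*} {R : X → X → Prop} {F : Set (Set X)}

lemma oc_anti {A B : Set X} (hab : A ⊆ B) : oc R B ⊆ oc R A :=
  fun _ hx a ha => hx a (hab ha)

lemma subset_oc_oc (hs : ∀ x y, R x y → R y x) (A : Set X) : A ⊆ oc R (oc R A) :=
  fun a ha b hb => hs b a (hb a ha)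

lemma oc_ocl (hs : ∀ x y, R x y → R y x) (A : Set X) : oc R (ocl R A) = oc R A :=
  Set.Subset.antisymm (oc_anti (subset_oc_oc hs A)) (subset_oc_oc hs (oc R A))

lemma mem_oc_ocl (hs : ∀ x y, R x y → R y x) {A : Set X} {x : X}
    (hx : x ∈ oc R A) : x ∈ oc R (ocl R A) := by
  rw [oc_ocl hs]; exact hx

lemma sproj_subset_ocl (A B : Set X) : sproj R A B ⊆ ocl R B :=
  Set.inter_subset_left

lemma sproj_oc_subset (P B : Set X) : sproj R P (oc R B) ⊆ oc R (ocl R B) :=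
  fun _ hz => hz.1

lemma sproj_mono_left {A A' : Set X} (hab : A ⊆ A') (B : Set X) :
    sproj R A B ⊆ sproj R A' B :=
  Set.inter_subset_inter le_rfl
    (oc_anti (Set.inter_subset_inter le_rfl (oc_anti hab)))

lemma zset_subset_oc (A : Set X) : zset R ⊆ oc R A := fun _ hz a _ => hz a

/-- Characterization of when a Sasaki projection equals the zero set. -/
lemma sproj_eq_zset_iff (h : IsOSpace R F) {C : Set X} (hC : C ∈ F) (P : Set X) :
    sproj R P C = zset R ↔ ∀ p ∈ P, ∀ c ∈ C, R p c := by
  constructor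
  · intro heq p hp c hc
    have h1 : sproj R {p} C ∪ sproj R {p} (oc R C) ⊆ oc R C := by
      apply Set.union_subset
      · refine (sproj_mono_left (Set.singleton_subset_iff.mpr hp) C).trans ?_
        rw [heq]; exact zset_subset_oc C
      · exact (sproj_oc_subset {p} C).trans (oc_anti (subset_oc_oc h.symm C))
    have h2 : p ∈ oc R C := by
      have := h.o1 p C hC
      have h3 : ocl R (sproj R {p} C ∪ sproj R {p} (oc R C)) ⊆ oc R C := by
        exact (oc_anti (R := R) (oc_anti (R := R) h1)).trans
          (oc_anti (subset_oc_oc h.symm C))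
      exact h3 this
    exact h2 c hc
  · intro horth
    apply Set.Subset.antisymm
    · intro z hz
      have hz1 : z ∈ ocl R C := hz.1
      have hPC : ocl R C ⊆ ocl R C ∩ oc R P := by
        intro u hu
        refine ⟨hu, fun p hp => ?_⟩
        have hpC : p ∈ oc R C := fun c hc => horth p hp c hc
        exact hu p hpC
      have : R z z := hz.2 z (hPC hz1)
      exact h.zero z this
    · intro z hz
      exact ⟨fun a _ => hz a, fun a _ => hz a⟩

/-- Self-adjointness of the Sasaki projection, pointwise, one direction. -/
lemma point_adjoint (h : IsOSpace R F) {B : Set X} (hB : B ∈ F) (x y : X)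
    (hxy : ∀ u ∈ sproj R {x} B, R u y) :
    ∀ z ∈ sproj R {y} B, R x z := by
  intro z hz
  have hzu : z ∈ oc R (sproj R {x} B ∪ sproj R {x} (oc R B)) := by
    intro v hv
    rcases hv with hv | hv
    · -- v ∈ sproj {x} B ; show R z v
      have hv1 : v ∈ oc R ({y} ∪ sproj R {y} (oc R B)) := by
        intro w hw
        rcases hw with hw | hw
        · rw [Set.mem_singleton_iff] at hw; subst hw; exact hxy v hv
        · exact h.symm w v (sproj_oc_subset {y} B hw v hv.1)
      have hv2 : v ∈ oc R (ocl R ({y} ∪ sproj R {y} (oc R B))) := mem_oc_ocl h.symm hv1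
      exact h.symm v z (hv2 z (h.o2 y B hB hz))
    · -- v ∈ sproj {x} (oc B) ; z ∈ ocl B
      exact h.symm v z (sproj_oc_subset {x} B hv z hz.1)
  have hz2 : z ∈ oc R (ocl R (sproj R {x} B ∪ sproj R {x} (oc R B))) :=
    mem_oc_ocl h.symm hzu
  exact h.symm z x (hz2 x (h.o1 x B hB))

/-- Self-adjointness of the Sasaki projection on flats. -/
lemma adjoint (h : IsOSpace R F) {A B C : Set X}
    (hA : A ∈ F) (hB : B ∈ F) (hC : C ∈ F) :
    (∀ u ∈ sproj R A B, ∀ c ∈ C, R u c) ↔ (∀ a ∈ A, ∀ v ∈ sproj R C B, R a v) := by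
  have key : (∀ a ∈ A, ∀ c ∈ C, ∀ u ∈ sproj R {a} B, R u c) ↔
      (∀ a ∈ A, ∀ c ∈ C, ∀ v ∈ sproj R {c} B, R a v) := by
    constructor
    · intro hk a ha c hc
      exact point_adjoint h hB a c (fun u hu => hk a ha c hc u hu)
    · intro hk a ha c hc u hu
      exact h.symm c u (point_adjoint h hB c a
        (fun v hv => h.symm a v (hk a ha c hc v hv)) u hu)
  constructor
  · intro h1 a ha v hv
    rcases Set.mem_iUnion₂.mp (h.a C hC B hB hv) with ⟨c, hc, hvc⟩
    exact key.mp (fun a' ha' c' hc' u hu =>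
      h1 u (sproj_mono_left (Set.singleton_subset_iff.mpr ha') B hu) c' hc') a ha c hc v hvc
  · intro h1 u hu c hc
    rcases Set.mem_iUnion₂.mp (h.a A hA B hB hu) with ⟨a, ha, hua⟩
    exact key.mpr (fun a' ha' c' hc' v hv =>
      h1 a' ha' v (sproj_mono_left (Set.singleton_subset_iff.mpr hc') B hv)) a ha c hc u hua

end Aux

theorem stmt16 (R : X → X → Prop) (F : Set (Set X)) (h : IsOSpace R F)
    (A B C : Set X) (hA : A ∈ F) (hB : B ∈ F) (hC : C ∈ F) :
    sproj R (sproj R A B) C = zset R ↔ sproj R A (sproj R C B) = zset R := by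
  rw [sproj_eq_zset_iff h hC (sproj R A B),
      sproj_eq_zset_iff h (h.sproj_mem C hC B hB) A]
  exact adjoint h hA hB hC
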